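/- There is no strictly Deza graph Γ with parameters (n, k, b, a) such that k = b + 1, β(v) > 1 for every vertex v, and every vertex of Γ is of type (B). -/

import Mathlib

open Finset SimpleGraph

universe u v

/-- The number of common neighbours of two vertices. -/
def commonNbrs {V : Type u} [Fintype V] [DecidableEq V] (G : SimpleGraph V)
    [DecidableRel G.Adj] (x y : V) : ℕ :=
  (G.neighborFinset x ∩ G.neighborFinset y).card

/-- `G` is a Deza graph with parameters `(n, k, b, a)`: a nonempty `k`-regular graph on `n`
vertices in which any two distinct vertices have either `b` or `a` common neighbours,
where `b ≥ a`. -/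
def IsDezaGraph {V : Type u} [Fintype V] [DecidableEq V] (G : SimpleGraph V)
    [DecidableRel G.Adj] (n k b a : ℕ) : Prop :=
  G ≠ ⊥ ∧ Fintype.card V = n ∧ G.IsRegularOfDegree k ∧ a ≤ b ∧
    ∀ x y : V, x ≠ y → commonNbrs G x y = b ∨ commonNbrs G x y = a

/-- `G` is a strictly Deza graph with parameters `(n, k, b, a)`: a Deza graph of
diameter 2 that is not strongly regular. -/
def IsStrictlyDezaGraph {V : Type u} [Fintype V] [DecidableEq V] (G : SimpleGraph V)
    [DecidableRel G.Adj] (n k b a : ℕ) : Prop :=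
  IsDezaGraph G n k b a ∧ G.Connected ∧ (∀ x y : V, G.dist x y ≤ 2) ∧
    (∃ x y : V, G.dist x y = 2) ∧ ¬ ∃ ℓ μ : ℕ, G.IsSRGWith n k ℓ μ

/-- `B(v)`: the set of vertices `u ≠ v` having exactly `b` common neighbours with `v`. -/
def dezaB {V : Type u} [Fintype V] [DecidableEq V] (G : SimpleGraph V)
    [DecidableRel G.Adj] (b : ℕ) (v : V) : Finset V :=
  univ.filter fun u => u ≠ v ∧ commonNbrs G u v = b

/-- `A(v)`: the set of vertices `u ≠ v` having exactly `a` common neighbours with `v`. -/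
def dezaA {V : Type u} [Fintype V] [DecidableEq V] (G : SimpleGraph V)
    [DecidableRel G.Adj] (a : ℕ) (v : V) : Finset V :=
  univ.filter fun u => u ≠ v ∧ commonNbrs G u v = a

/-- `B[v] = B(v) ∪ {v}`. -/
def dezaBc {V : Type u} [Fintype V] [DecidableEq V] (G : SimpleGraph V)
    [DecidableRel G.Adj] (b : ℕ) (v : V) : Finset V :=
  insert v (dezaB G b v)

/-- A vertex `v` is of type (A) if `B(v) ∩ N(v) = ∅`. -/
def IsTypeA {V : Type u} [Fintype V] [DecidableEq V] (G : SimpleGraph V)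
    [DecidableRel G.Adj] (b : ℕ) (v : V) : Prop :=
  dezaB G b v ∩ G.neighborFinset v = ∅

/-- A vertex `v` is of type (B) if `B(v) ⊆ N(v)`. -/
def IsTypeB {V : Type u} [Fintype V] [DecidableEq V] (G : SimpleGraph V)
    [DecidableRel G.Adj] (b : ℕ) (v : V) : Prop :=
  dezaB G b v ⊆ G.neighborFinset v

/-- A vertex `v` is of type (C) if `|B(v) ∩ N(v)| = 1`. -/
def IsTypeC {V : Type u} [Fintype V] [DecidableEq V] (G : SimpleGraph V)
    [DecidableRel G.Adj] (b : ℕ) (v : V) : Prop :=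
  (dezaB G b v ∩ G.neighborFinset v).card = 1

/-- A vertex `x` of type (A) is of type (A1) if there exists `y ∈ N(x)` with
`N(x) \ N(xᵢ) = {y}` for every `xᵢ ∈ B(x)`. -/
def IsTypeA1 {V : Type u} [Fintype V] [DecidableEq V] (G : SimpleGraph V)
    [DecidableRel G.Adj] (b : ℕ) (x : V) : Prop :=
  IsTypeA G b x ∧ ∃ y ∈ G.neighborFinset x,
    ∀ xi ∈ dezaB G b x, G.neighborFinset x \ G.neighborFinset xi = {y}

/-- A vertex `x` of type (A) is of type (A2) if there exists `z ∉ N[x]` with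
`N(xᵢ) \ N(x) = {z}` for every `xᵢ ∈ B(x)`. -/
def IsTypeA2 {V : Type u} [Fintype V] [DecidableEq V] (G : SimpleGraph V)
    [DecidableRel G.Adj] (b : ℕ) (x : V) : Prop :=
  IsTypeA G b x ∧ ∃ z ∉ insert x (G.neighborFinset x),
    ∀ xi ∈ dezaB G b x, G.neighborFinset xi \ G.neighborFinset x = {z}

/-- The complete multipartite graph with `m` parts of size `t`. -/
def completeMultipartiteGr (m t : ℕ) : SimpleGraph (Fin m × Fin t) where
  Adj u v := u.1 ≠ v.1
  symm := ⟨fun _ _ h => Ne.symm h⟩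
  loopless := ⟨fun _ h => h rfl⟩

/-- The 2-clique extension of a graph `H`: vertices `(u, i)` and `(v, j)` are adjacent
iff `u ~ v` in `H`, or `u = v` and `i ≠ j`. -/
def cliqueExt2 {W : Type v} (H : SimpleGraph W) : SimpleGraph (W × Fin 2) where
  Adj u v := H.Adj u.1 v.1 ∨ (u.1 = v.1 ∧ u.2 ≠ v.2)
  symm := by
    constructor
    intro u v h
    rcases h with h | ⟨h1, h2⟩
    · exact Or.inl h.symm
    · exact Or.inr ⟨h1.symm, h2.symm⟩
  loopless := by
    constructor
    intro u h
    rcases h with h | ⟨_, h2⟩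
    · exact H.irrefl h
    · exact h2 rfl


/-!
Under `k = b + 1` and type (B), two distinct vertices have `b` common neighbours exactly when
they are closed twins, `N[u] = N[v]`; so the closed-twin class of `v` is `B[v]`. Since `b > a`,
double counting the paths of length two from `v` shows that `β` is constant, so all twin classes
have the same size `c = β + 1 ≥ 3`. Every `N[x] ∩ N[y]` is a union of twin classes, because
`w ∈ N[x] ↔ x ∈ N[w]`. For a path `x ~ z ~ y` with `d(x, y) = 2` this gives `c ∣ a` from the
pair `x, y` and `c ∣ a + 2` from the adjacent non-twins `x, z`; hence `c ∣ 2`, a contradiction.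
-/

lemma Finset.dvd_card_of_forall_card_fiber {α β : Type*} [Fintype α] [DecidableEq β]
    (f : α → β) {c : ℕ} (hc : ∀ x, #{y | f y = f x} = c) {s : Finset α}
    (hs : ∀ x ∈ s, ∀ y, f y = f x → y ∈ s) : c ∣ #s := by
  rw [card_eq_sum_card_fiberwise (t := s.image f) fun x hx ↦ mem_image_of_mem f hx]
  refine dvd_sum fun z hz ↦ ?_
  obtain ⟨x, hx, rfl⟩ := mem_image.mp hz
  have hfiber : {y ∈ s | f y = f x} = ({y | f y = f x} : Finset α) := by
    ext y
    simpa using hs x hx y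
  rw [hfiber, hc x]

lemma Finset.sum_eq_mul_card_add_mul_card_filter {ι : Type*} {s : Finset ι} {f : ι → ℕ}
    {a b : ℕ} (hab : a ≤ b) (h : ∀ i ∈ s, f i = b ∨ f i = a) :
    ∑ i ∈ s, f i = a * #s + (b - a) * #{i ∈ s | f i = b} := by
  rw [card_filter, card_eq_sum_ones, mul_sum, mul_sum, ← sum_add_distrib]
  refine sum_congr rfl fun i hi ↦ ?_
  rcases h i hi with hi | hi <;> split_ifs <;> omega

lemma SimpleGraph.dist_eq_two_iff {V : Type*} {G : SimpleGraph V} {u v : V} :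
    G.dist u v = 2 ↔ u ≠ v ∧ ¬ G.Adj u v ∧ (G.commonNeighbors u v).Nonempty := by
  rw [← edist_eq_two_iff]
  constructor
  · intro h
    rw [← (Reachable.of_dist_ne_zero (by omega)).coe_dist_eq_edist, h]
    rfl
  · intro h
    have hr : G.Reachable u v := reachable_of_edist_ne_top (by simp [h])
    exact_mod_cast hr.coe_dist_eq_edist.trans h

section ClosedNeighbourhoods

variable {V : Type u} [Fintype V] [DecidableEq V] {G : SimpleGraph V} [DecidableRel G.Adj]

variable (G) in
def closedNbrs (v : V) : Finset V := insert v (G.neighborFinset v)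

@[simp]
lemma mem_closedNbrs {u v : V} : u ∈ closedNbrs G v ↔ u = v ∨ G.Adj v u := by
  simp [closedNbrs]

lemma mem_closedNbrs_comm {u v : V} : u ∈ closedNbrs G v ↔ v ∈ closedNbrs G u := by
  simp [eq_comm, G.adj_comm]

lemma card_closedNbrs {k : ℕ} (hreg : G.IsRegularOfDegree k) (v : V) :
    #(closedNbrs G v) = k + 1 := by
  rw [closedNbrs, card_insert_of_notMem (G.notMem_neighborFinset_self v),
    card_neighborFinset_eq_degree, hreg v]

lemma closedNbrs_inter_of_adj {x y : V} (h : G.Adj x y) :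
    closedNbrs G x ∩ closedNbrs G y =
      insert x (insert y (G.neighborFinset x ∩ G.neighborFinset y)) := by
  ext w
  simp only [mem_inter, mem_closedNbrs, mem_insert, mem_neighborFinset]
  constructor
  · rintro ⟨rfl | hxw, rfl | hyw⟩ <;> tauto
  · rintro (rfl | rfl | ⟨hxw, hyw⟩)
    · exact ⟨.inl rfl, .inr h.symm⟩
    · exact ⟨.inr h, .inl rfl⟩
    · exact ⟨.inr hxw, .inr hyw⟩

lemma card_closedNbrs_inter_of_adj {x y : V} (h : G.Adj x y) :
    #(closedNbrs G x ∩ closedNbrs G y) = commonNbrs G x y + 2 := by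
  rw [closedNbrs_inter_of_adj h, card_insert_of_notMem, card_insert_of_notMem, commonNbrs]
  · simp
  · simp [h.ne]

lemma card_closedNbrs_inter_of_not_adj {x y : V} (hne : x ≠ y) (h : ¬ G.Adj x y) :
    #(closedNbrs G x ∩ closedNbrs G y) = commonNbrs G x y := by
  rw [commonNbrs]
  congr 1
  ext w
  simp only [mem_inter, mem_closedNbrs, mem_neighborFinset]
  constructor
  · rintro ⟨rfl | hxw, rfl | hyw⟩ <;> simp_all [G.adj_comm]
  · rintro ⟨hxw, hyw⟩
    exact ⟨.inr hxw, .inr hyw⟩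

lemma closedNbrs_eq_iff_of_adj {k : ℕ} (hreg : G.IsRegularOfDegree k) {x y : V}
    (h : G.Adj x y) : closedNbrs G x = closedNbrs G y ↔ commonNbrs G x y + 1 = k := by
  calc closedNbrs G x = closedNbrs G y
        ↔ closedNbrs G x ∩ closedNbrs G y = closedNbrs G x := by
          refine ⟨fun hxy ↦ by rw [hxy, inter_self], fun hx ↦ ?_⟩
          refine eq_of_subset_of_card_le (inter_eq_left.mp hx) ?_
          rw [card_closedNbrs hreg, card_closedNbrs hreg]
    _ ↔ #(closedNbrs G x ∩ closedNbrs G y) = #(closedNbrs G x) :=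
          ⟨congrArg card, fun hcard ↦ eq_of_subset_of_card_le inter_subset_left hcard.ge⟩
    _ ↔ commonNbrs G x y + 1 = k := by
          rw [card_closedNbrs_inter_of_adj h, card_closedNbrs hreg]
          omega

lemma adj_of_closedNbrs_eq {x y : V} (hne : x ≠ y) (h : closedNbrs G x = closedNbrs G y) :
    G.Adj x y := by
  have hx : x ∈ closedNbrs G y := h ▸ mem_insert_self x _
  exact ((mem_closedNbrs.mp hx).resolve_left hne).symm

end ClosedNeighbourhoods

section Deza

variable {V : Type u} [Fintype V] [DecidableEq V] {G : SimpleGraph V} [DecidableRel G.Adj]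

lemma sum_commonNbrs {k : ℕ} (hreg : G.IsRegularOfDegree k) (v : V) :
    ∑ u, commonNbrs G u v = k * k := by
  calc ∑ u, commonNbrs G u v
      = ∑ u, ∑ w ∈ G.neighborFinset v, if G.Adj u w then 1 else 0 := by
        refine sum_congr rfl fun u _ ↦ ?_
        rw [commonNbrs, ← card_filter, inter_comm, ← filter_mem_eq_inter]
        simp
    _ = ∑ w ∈ G.neighborFinset v, G.degree w := by
        rw [sum_comm]
        refine sum_congr rfl fun w _ ↦ ?_
        rw [← card_filter, ← card_neighborFinset_eq_degree]
        congr 1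
        ext u
        simp [G.adj_comm]
    _ = k * k := by
        rw [sum_congr rfl fun w _ ↦ hreg w, sum_const, card_neighborFinset_eq_degree, hreg v,
          smul_eq_mul]

lemma dezaB_eq_filter (b : ℕ) (v : V) :
    dezaB G b v = {u ∈ univ.erase v | commonNbrs G u v = b} := by
  ext u
  simp [dezaB]

lemma card_dezaB_eq_of_lt {k b a : ℕ} (hreg : G.IsRegularOfDegree k) (hab : a < b)
    (hdeza : ∀ x y : V, x ≠ y → commonNbrs G x y = b ∨ commonNbrs G x y = a) (v w : V) :
    #(dezaB G b v) = #(dezaB G b w) := by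
  have hsum : ∀ x : V, ∑ u, commonNbrs G u x =
      k + (a * (Fintype.card V - 1) + (b - a) * #(dezaB G b x)) := fun x ↦ by
    rw [← add_sum_erase _ _ (mem_univ x), dezaB_eq_filter,
      sum_eq_mul_card_add_mul_card_filter hab.le fun u hu ↦ hdeza u x (ne_of_mem_erase hu),
      card_erase_of_mem (mem_univ x), card_univ]
    congr 1
    rw [commonNbrs, inter_self, card_neighborFinset_eq_degree, hreg x]
  have h : k + (a * (Fintype.card V - 1) + (b - a) * #(dezaB G b v)) =
      k + (a * (Fintype.card V - 1) + (b - a) * #(dezaB G b w)) := by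
    rw [← hsum v, ← hsum w, sum_commonNbrs hreg, sum_commonNbrs hreg]
  exact Nat.eq_of_mul_eq_mul_left (Nat.sub_pos_of_lt hab) (by omega)

lemma card_dezaBc (b : ℕ) (v : V) : #(dezaBc G b v) = #(dezaB G b v) + 1 :=
  card_insert_of_notMem (by simp [dezaB])

lemma commonNbrs_eq_iff_closedNbrs_eq {k b : ℕ} (hreg : G.IsRegularOfDegree k)
    (hk : k = b + 1) (htypeB : ∀ x : V, IsTypeB G b x) {u v : V} (hne : u ≠ v) :
    commonNbrs G u v = b ↔ closedNbrs G u = closedNbrs G v := by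
  constructor
  · intro h
    have hadj : G.Adj u v :=
      ((mem_neighborFinset _ _ _).mp (htypeB v (by simp [dezaB, hne, h]))).symm
    exact (closedNbrs_eq_iff_of_adj hreg hadj).mpr (by omega)
  · intro h
    have := (closedNbrs_eq_iff_of_adj hreg (adj_of_closedNbrs_eq hne h)).mp h
    omega

lemma filter_closedNbrs_eq_eq_dezaBc {k b : ℕ} (hreg : G.IsRegularOfDegree k)
    (hk : k = b + 1) (htypeB : ∀ x : V, IsTypeB G b x) (v : V) :
    ({u | closedNbrs G u = closedNbrs G v} : Finset V) = dezaBc G b v := by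
  ext u
  rcases eq_or_ne u v with rfl | hne
  · simp [dezaBc]
  · simp [dezaBc, dezaB, hne, commonNbrs_eq_iff_closedNbrs_eq hreg hk htypeB hne]

lemma dvd_card_closedNbrs_inter {c : ℕ}
    (hc : ∀ v : V, #{u | closedNbrs G u = closedNbrs G v} = c) (x y : V) :
    c ∣ #(closedNbrs G x ∩ closedNbrs G y) := by
  refine dvd_card_of_forall_card_fiber (closedNbrs G) hc fun w hw w' hw' ↦ ?_
  simpa only [mem_inter, mem_closedNbrs_comm (u := w'), mem_closedNbrs_comm (u := w), hw']
    using hw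

end Deza

theorem stmt17 {V : Type u} [Fintype V] [DecidableEq V] (G : SimpleGraph V)
    [DecidableRel G.Adj] (n k b a : ℕ) :
    ¬ (IsStrictlyDezaGraph G n k b a ∧ k = b + 1 ∧
        (∀ v : V, 1 < (dezaB G b v).card) ∧
        ∀ x : V, IsTypeB G b x) := by
  rintro ⟨⟨⟨-, -, hreg, hab, hdeza⟩, -, -, ⟨x, y, hxy⟩, -⟩, hk, hβ, htypeB⟩
  have htwin : ∀ {u v : V}, u ≠ v → (commonNbrs G u v = b ↔ closedNbrs G u = closedNbrs G v) :=
    commonNbrs_eq_iff_closedNbrs_eq hreg hk htypeB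
  obtain ⟨hne, hnadj, z, hzxy⟩ := dist_eq_two_iff.mp hxy
  obtain ⟨hxz, hyz⟩ := G.mem_commonNeighbors.mp hzxy
  have hNxy : closedNbrs G x ≠ closedNbrs G y := fun h ↦ hnadj (adj_of_closedNbrs_eq hne h)
  have hNxz : closedNbrs G x ≠ closedNbrs G z := fun h ↦ by
    have : y ∈ closedNbrs G z := mem_closedNbrs.mpr (.inr hyz.symm)
    simp [← h, hne.symm, hnadj] at this
  have hxy_a : commonNbrs G x y = a := (hdeza x y hne).resolve_left (mt (htwin hne).mp hNxy)
  have hxz_a : commonNbrs G x z = a :=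
    (hdeza x z hxz.ne).resolve_left (mt (htwin hxz.ne).mp hNxz)
  have hab : a < b := hab.lt_of_ne fun h ↦ hNxy ((htwin hne).mp (hxy_a.trans h))
  have hc : ∀ v, #{u | closedNbrs G u = closedNbrs G v} = #(dezaB G b x) + 1 := fun v ↦ by
    rw [filter_closedNbrs_eq_eq_dezaBc hreg hk htypeB, card_dezaBc,
      card_dezaB_eq_of_lt hreg hab hdeza v x]
  have hdvd_a := dvd_card_closedNbrs_inter hc x y
  have hdvd_a2 := dvd_card_closedNbrs_inter hc x z
  rw [card_closedNbrs_inter_of_not_adj hne hnadj, hxy_a] at hdvd_a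
  rw [card_closedNbrs_inter_of_adj hxz, hxz_a] at hdvd_a2
  have hc_le := Nat.le_of_dvd two_pos ((Nat.dvd_add_right hdvd_a).mp hdvd_a2)
  have := hβ x
  omega
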